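/- arXiv:1710.08208 — 2 statements merged into one kernel-verified Lean document; each statement's English description precedes it below -/
import Mathlib

section
/- For H ∈ (0,1), define ρ_i = (1/(2 i^H)) ((i+1)^{2H} - i^{2H} - 1) for integers i ≥ 1. Then there exists ρ < 1 such that |ρ_i| ≤ ρ for all i ≥ 1. -/
/-!
With `a = i ^ H` and `b = (i + 1) ^ H` we have `ρ_i = (b² - a² - 1) / (2a)`, `1 ≤ a ≤ b`, and by
Bernoulli's inequality `b ≤ a + H`. Hence `-1/2 ≤ ρ_i ≤ H + (H² - 1) / (2a) ≤ H`.
-/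

open Real

lemma add_one_rpow_le_rpow_add {x p : ℝ} (hx : 1 ≤ x) (hp0 : 0 ≤ p) (hp1 : p ≤ 1) :
    (x + 1) ^ p ≤ x ^ p + p := by
  have hx0 : 0 < x := by linarith
  have hxp : x ^ p ≤ x := by simpa using rpow_le_rpow_of_exponent_le hx hp1
  have bernoulli : (1 + 1 / x) ^ p ≤ 1 + p * (1 / x) :=
    rpow_one_add_le_one_add_mul_self (by linarith [one_div_pos.mpr hx0]) hp0 hp1
  calc (x + 1) ^ p = x ^ p * (1 + 1 / x) ^ p := by
        rw [← mul_rpow hx0.le (by positivity)]; congr 1; field_simp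
    _ ≤ x ^ p * (1 + p * (1 / x)) := by gcongr
    _ = x ^ p + p * (x ^ p / x) := by ring
    _ ≤ x ^ p + p := by
        gcongr
        exact mul_le_of_le_one_right hp0 ((div_le_one hx0).mpr hxp)

lemma abs_sq_sub_sq_sub_one_div_le {a b p : ℝ} (ha : 1 ≤ a) (hab : a ≤ b) (hb : b ≤ a + p)
    (hp1 : p ≤ 1) :
    |(b ^ 2 - a ^ 2 - 1) / (2 * a)| ≤ max p (1 / 2) := by
  have ha0 : 0 < 2 * a := by linarith
  rw [abs_le, le_div_iff₀ ha0, div_le_iff₀ ha0]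
  constructor
  · nlinarith [le_max_right p (1 / 2)]
  · nlinarith [le_max_left p (1 / 2)]

/-- The correlations ρ_i are uniformly bounded away from ±1. -/
theorem rho_uniformly_bounded (H : ℝ) (hH : H ∈ Set.Ioo (0:ℝ) 1) :
    ∃ ρ : ℝ, ρ < 1 ∧ ∀ i : ℕ, 1 ≤ i →
      |(1 / (2 * (i:ℝ) ^ H)) * (((i:ℝ)+1) ^ (2*H) - (i:ℝ) ^ (2*H) - 1)| ≤ ρ := by
  obtain ⟨hH0, hH1⟩ := hH
  refine ⟨max H (1 / 2), max_lt hH1 (by norm_num), fun i hi => ?_⟩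
  have hx : (1 : ℝ) ≤ i := by exact_mod_cast hi
  have rpow_two_mul {y : ℝ} (hy : 0 ≤ y) : y ^ (2 * H) = (y ^ H) ^ 2 := by
    rw [mul_comm, rpow_mul hy, rpow_two]
  rw [rpow_two_mul (by positivity), rpow_two_mul (by positivity), one_div_mul_eq_div]
  exact abs_sq_sub_sq_sub_one_div_le (one_le_rpow hx hH0.le)
    (rpow_le_rpow (by positivity) (by linarith) hH0.le)
    (add_one_rpow_le_rpow_add hx hH0.le hH1.le) hH1.le
end

section
/- Let Σ, Σ' be d×d symmetric positive definite matrices with entries bounded by K and determinants bounded below by 1/K, and let φ_Σ, φ_{Σ'} denote the centered Gaussian densities with covariances Σ, Σ'. Then there exist constants c_K, C_K > 0 (depending only on d and K) such that for all y ∈ ℝ^d, |φ_Σ(y) − φ_{Σ'}(y)| ≤ C_K (1 + ‖y‖²) exp(−c_K ‖y‖²) · max_{i,j} |Σ_{ij} − Σ'_{ij}|. -/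
/-!
Write `φ_Σ(y) = (2π)^(-d/2) · a(Σ) · exp(-q_Σ(y)/2)` with `a(Σ) = det Σ ^ (-1/2)` and
`q_Σ(y) = yᵀ Σ⁻¹ y`. The determinant is multilinear in the rows, hence Lipschitz on matrices with
bounded entries, and it stays above `1/K`, so `a` is Lipschitz there. The entries of
`Σ⁻¹ = adj Σ / det Σ` are bounded, so `Σ⁻¹ - Σ'⁻¹ = Σ⁻¹ (Σ' - Σ) Σ'⁻¹` gives
`|q_Σ(y) - q_Σ'(y)| ≲ ε ‖y‖²` with `ε = max |Σᵢⱼ - Σ'ᵢⱼ|`. Cauchy–Schwarz for the form of `Σ`,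
together with `yᵀ Σ y ≤ d K ‖y‖²`, gives `q_Σ(y) ≥ ‖y‖² / (d K)`, and finally
`|e^(-s) - e^(-t)| ≤ e^(-min s t) |s - t|`.
-/

open Matrix Real

/-- The centered Gaussian density with covariance matrix `S`. -/
noncomputable def gaussianDensityMat {d : ℕ} (S : Matrix (Fin d) (Fin d) ℝ)
    (y : Fin d → ℝ) : ℝ :=
  (2 * π) ^ (-(d:ℝ)/2) * S.det ^ (-(1:ℝ)/2) * exp (-(y ⬝ᵥ (S⁻¹).mulVec y) / 2)

lemma abs_rpow_neg_half_sub_le {k a b : ℝ} (hk : 0 < k) (ha : k ≤ a) (hb : k ≤ b) :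
    |a ^ (-(1:ℝ)/2) - b ^ (-(1:ℝ)/2)| ≤ |a - b| / (2 * k * √k) := by
  have hsa : √k ≤ √a := sqrt_le_sqrt ha
  have hsb : √k ≤ √b := sqrt_le_sqrt hb
  have hsk : 0 < √k := sqrt_pos.2 hk
  have hsa0 : 0 < √a := hsk.trans_le hsa
  have hsb0 : 0 < √b := hsk.trans_le hsb
  have hdiff : a ^ (-(1:ℝ)/2) - b ^ (-(1:ℝ)/2) = (b - a) / (√a * √b * (√a + √b)) := by
    rw [show -(1:ℝ)/2 = -(1/2) by norm_num, rpow_neg (by linarith), rpow_neg (by linarith),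
      ← sqrt_eq_rpow, ← sqrt_eq_rpow]
    field_simp
    nlinarith [sq_sqrt (hk.le.trans ha), sq_sqrt (hk.le.trans hb)]
  rw [hdiff, abs_div, abs_sub_comm, abs_of_pos (by positivity : 0 < √a * √b * (√a + √b))]
  refine div_le_div_of_nonneg_left (abs_nonneg _) (by positivity) ?_
  calc 2 * k * √k = √k * √k * (√k + √k) := by rw [mul_self_sqrt hk.le]; ring
    _ ≤ √a * √b * (√a + √b) := by gcongr

lemma abs_exp_sub_exp_le (x y : ℝ) : |exp x - exp y| ≤ exp (max x y) * |x - y| := by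
  wlog h : x ≤ y generalizing x y
  · rw [abs_sub_comm, abs_sub_comm x, max_comm]
    exact this y x (le_of_not_ge h)
  rw [max_eq_right h, abs_of_nonpos (sub_nonpos.2 (exp_le_exp.2 h)),
    abs_of_nonpos (sub_nonpos.2 h)]
  have := add_one_le_exp (x - y)
  rw [exp_sub, le_div_iff₀ (exp_pos y)] at this
  nlinarith [exp_pos y]

open Finset

namespace Matrix

section Entrywise

variable {n : Type*} [Fintype n]

lemma abs_dotProduct_mulVec_le {m : Type*} [Fintype m] {A : Matrix m n ℝ} {M : ℝ}
    (hA : ∀ i j, |A i j| ≤ M) (x : m → ℝ) (y : n → ℝ) :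
    |x ⬝ᵥ A *ᵥ y| ≤ M * (∑ i, |x i|) * ∑ j, |y j| := by
  calc |x ⬝ᵥ A *ᵥ y| = |∑ i, ∑ j, x i * A i j * y j| := by
        simp only [dotProduct, mulVec, mul_sum, mul_assoc]
    _ ≤ ∑ i, ∑ j, |x i| * M * |y j| := by
        refine (abs_sum_le_sum_abs _ _).trans (sum_le_sum fun i _ ↦
          (abs_sum_le_sum_abs _ _).trans (sum_le_sum fun j _ ↦ ?_))
        rw [abs_mul, abs_mul]
        gcongr
        exact hA i j
    _ = M * (∑ i, |x i|) * ∑ j, |y j| := by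
        rw [mul_assoc, sum_mul_sum, mul_sum]
        refine sum_congr rfl fun i _ ↦ ?_
        rw [mul_sum]
        exact sum_congr rfl fun j _ ↦ by ring

lemma abs_dotProduct_mulVec_self_le {A : Matrix n n ℝ} {M : ℝ} (hM : 0 ≤ M)
    (hA : ∀ i j, |A i j| ≤ M) (y : n → ℝ) :
    |y ⬝ᵥ A *ᵥ y| ≤ M * Fintype.card n * ∑ i, y i ^ 2 := by
  have hcard : (∑ i, |y i|) ^ 2 ≤ Fintype.card n * ∑ i, y i ^ 2 := by
    simpa only [sq_abs, card_univ] using sq_sum_le_card_mul_sum_sq (s := univ) (f := (|y ·|))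
  calc |y ⬝ᵥ A *ᵥ y| ≤ M * (∑ i, |y i|) ^ 2 := by
        simpa only [mul_assoc, sq] using abs_dotProduct_mulVec_le hA y y
    _ ≤ M * Fintype.card n * ∑ i, y i ^ 2 := by
        rw [mul_assoc]; gcongr

variable [DecidableEq n]

/-- Cauchy–Schwarz for the form `(x, z) ↦ x ⬝ᵥ A *ᵥ z`, applied to `y` and `A⁻¹ *ᵥ y`. -/
lemma PosDef.sq_dotProduct_self_le {A : Matrix n n ℝ} (hA : A.PosDef) (y : n → ℝ) :
    (y ⬝ᵥ y) ^ 2 ≤ (y ⬝ᵥ A *ᵥ y) * (y ⬝ᵥ A⁻¹ *ᵥ y) := by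
  have hunit : IsUnit A.det := hA.det_pos.ne'.isUnit
  have hsymm : Aᵀ = A := hA.isHermitian
  set u := A⁻¹ *ᵥ y
  have hAu : A *ᵥ u = y := by simp [u, mulVec_mulVec, mul_nonsing_inv _ hunit]
  have hcs := LinearMap.BilinForm.apply_mul_apply_le_of_forall_zero_le (toLinearMap₂' ℝ A)
    (fun x ↦ by simpa [toLinearMap₂'_apply'] using hA.posSemidef.dotProduct_mulVec_nonneg x) y u
  simp only [toLinearMap₂'_apply', hAu] at hcs
  rwa [dotProduct_mulVec, ← mulVec_transpose, hsymm, hAu, dotProduct_comm u y, ← sq] at hcs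

lemma PosDef.dotProduct_inv_mulVec_nonneg {A : Matrix n n ℝ} (hA : A.PosDef) (y : n → ℝ) :
    0 ≤ y ⬝ᵥ A⁻¹ *ᵥ y := by
  simpa using hA.inv.posSemidef.dotProduct_mulVec_nonneg y

lemma PosDef.sum_sq_le_mul_dotProduct_inv_mulVec {A : Matrix n n ℝ} (hA : A.PosDef) {K : ℝ}
    (hK : 0 ≤ K) (hAK : ∀ i j, |A i j| ≤ K) (y : n → ℝ) :
    ∑ i, y i ^ 2 ≤ K * Fintype.card n * (y ⬝ᵥ A⁻¹ *ᵥ y) := by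
  have hq := hA.dotProduct_inv_mulVec_nonneg y
  have hp := (le_abs_self _).trans (abs_dotProduct_mulVec_self_le hK hAK y)
  have hcs := hA.sq_dotProduct_self_le y
  rw [show y ⬝ᵥ y = ∑ i, y i ^ 2 by simp only [dotProduct, sq]] at hcs
  rcases (sum_nonneg fun i _ ↦ sq_nonneg (y i) : 0 ≤ ∑ i, y i ^ 2).eq_or_lt with h0 | hpos
  · rw [← h0]; positivity
  · nlinarith [mul_le_mul_of_nonneg_right hp hq]

lemma PosDef.sum_sq_div_le_dotProduct_inv_mulVec {A : Matrix n n ℝ} (hA : A.PosDef) {K : ℝ}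
    (hK : 0 < K) (hAK : ∀ i j, |A i j| ≤ K) (y : n → ℝ) :
    (∑ i, y i ^ 2) / ((Fintype.card n + 1) * K) ≤ y ⬝ᵥ A⁻¹ *ᵥ y := by
  have hN := hA.sum_sq_le_mul_dotProduct_inv_mulVec hK.le hAK y
  have hq := hA.dotProduct_inv_mulVec_nonneg y
  rw [div_le_iff₀ (by positivity)]
  nlinarith

lemma abs_adjugate_apply_le {A : Matrix n n ℝ} {M : ℝ} (hA : ∀ i j, |A i j| ≤ M) (i j : n) :
    |A.adjugate i j| ≤ (Fintype.card n).factorial * max M 1 ^ Fintype.card n := by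
  rw [adjugate_apply, ← nsmul_eq_mul]
  refine det_le (abv := AbsoluteValue.abs) fun k l ↦ ?_
  rw [updateRow_apply]
  split_ifs
  · rcases eq_or_ne l i with rfl | hl
    · simp
    · simp [Pi.single_eq_of_ne hl]
  · exact le_max_of_le_left (hA k l)

lemma abs_inv_apply_le {A : Matrix n n ℝ} {M δ : ℝ} (hA : ∀ i j, |A i j| ≤ M) (hδ : 0 < δ)
    (hdet : δ ≤ |A.det|) (i j : n) :
    |A⁻¹ i j| ≤ (Fintype.card n).factorial * max M 1 ^ Fintype.card n / δ := by
  rw [inv_def, smul_apply, smul_eq_mul, abs_mul, Ring.inverse_eq_inv', abs_inv, inv_mul_eq_div]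
  gcongr
  exact abs_adjugate_apply_le hA i j

lemma abs_inv_sub_inv_apply_le {A B : Matrix n n ℝ} (hA : IsUnit A.det) (hB : IsUnit B.det)
    {M ε : ℝ} (hε : 0 ≤ ε) (hAM : ∀ i j, |A⁻¹ i j| ≤ M) (hBM : ∀ i j, |B⁻¹ i j| ≤ M)
    (hAB : ∀ i j, |A i j - B i j| ≤ ε) (i j : n) :
    |(A⁻¹ - B⁻¹) i j| ≤ ε * (Fintype.card n * M) ^ 2 := by
  have hunit : IsUnit A ↔ IsUnit B :=
    ⟨fun _ ↦ (isUnit_iff_isUnit_det B).2 hB, fun _ ↦ (isUnit_iff_isUnit_det A).2 hA⟩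
  have hentry : (A⁻¹ * (B - A) * B⁻¹) i j = (A⁻¹ i ·) ⬝ᵥ (B - A) *ᵥ (B⁻¹ · j) := by
    simp only [mul_apply, dotProduct, mulVec, sum_mul, mul_sum, mul_assoc]
    exact sum_comm
  have hBA : ∀ k l, |(B - A) k l| ≤ ε := fun k l ↦ by simpa [abs_sub_comm] using hAB k l
  rw [inv_sub_inv hunit, hentry]
  calc _ ≤ ε * (∑ k, |A⁻¹ i k|) * ∑ l, |B⁻¹ l j| := abs_dotProduct_mulVec_le hBA _ _
    _ ≤ ε * (∑ _k : n, M) * ∑ _l : n, M := by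
        have hM : 0 ≤ M := (abs_nonneg _).trans (hAM i i)
        gcongr
        · exact hAM i _
        · exact hBM _ j
    _ = ε * (Fintype.card n * M) ^ 2 := by simp; ring

lemma abs_dotProduct_inv_mulVec_sub_le {A B : Matrix n n ℝ} (hA : IsUnit A.det)
    (hB : IsUnit B.det) {M ε : ℝ} (hε : 0 ≤ ε) (hAM : ∀ i j, |A⁻¹ i j| ≤ M)
    (hBM : ∀ i j, |B⁻¹ i j| ≤ M) (hAB : ∀ i j, |A i j - B i j| ≤ ε) (y : n → ℝ) :
    |y ⬝ᵥ A⁻¹ *ᵥ y - y ⬝ᵥ B⁻¹ *ᵥ y| ≤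
      ε * (Fintype.card n * M) ^ 2 * Fintype.card n * ∑ i, y i ^ 2 := by
  rw [← dotProduct_sub, ← sub_mulVec]
  exact abs_dotProduct_mulVec_self_le (by positivity)
    (abs_inv_sub_inv_apply_le hA hB hε hAM hBM hAB) y

end Entrywise

/-- The determinant is a continuous multilinear function of the rows. -/
lemma exists_abs_det_sub_le (n : Type*) [Fintype n] [DecidableEq n] {K : ℝ} (hK : 0 ≤ K) :
    ∃ L, 0 ≤ L ∧ ∀ A B : Matrix n n ℝ, (∀ i j, |A i j| ≤ K) → (∀ i j, |B i j| ≤ K) →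
      ∀ ε, 0 ≤ ε → (∀ i j, |A i j - B i j| ≤ ε) → |A.det - B.det| ≤ L * ε := by
  let det : MultilinearMap ℝ (fun _ : n ↦ n → ℝ) ℝ :=
    (detRowAlternating : (n → ℝ) [⋀^n]→ₗ[ℝ] ℝ).toMultilinearMap
  obtain ⟨C, hC, hdet⟩ := det.exists_bound_of_continuous (continuous_id.matrix_det)
  have hnorm {X : n → n → ℝ} {r : ℝ} (hr : 0 ≤ r) (hX : ∀ i j, |X i j| ≤ r) : ‖X‖ ≤ r :=
    (pi_norm_le_iff_of_nonneg hr).2 fun i ↦ (pi_norm_le_iff_of_nonneg hr).2 (hX i)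
  refine ⟨C * Fintype.card n * K ^ (Fintype.card n - 1), by positivity,
    fun A B hA hB ε hε hAB ↦ ?_⟩
  calc |A.det - B.det| ≤ _ := det.norm_image_sub_le_of_bound hC.le hdet A B
    _ ≤ C * Fintype.card n * K ^ (Fintype.card n - 1) * ε := by
      gcongr
      · exact le_max_of_le_left (norm_nonneg _)
      · exact max_le (hnorm hK hA) (hnorm hK hB)
      · exact hnorm hε hAB

lemma exists_abs_det_rpow_neg_half_sub_le (n : Type*) [Fintype n] [DecidableEq n] {K : ℝ}
    (hK : 0 < K) :
    ∃ P, 0 ≤ P ∧ ∀ A B : Matrix n n ℝ, (∀ i j, |A i j| ≤ K) → (∀ i j, |B i j| ≤ K) →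
      1 / K ≤ A.det → 1 / K ≤ B.det → ∀ ε, 0 ≤ ε → (∀ i j, |A i j - B i j| ≤ ε) →
      |A.det ^ (-(1:ℝ)/2) - B.det ^ (-(1:ℝ)/2)| ≤ P * ε := by
  obtain ⟨L, hL0, hL⟩ := exists_abs_det_sub_le n hK.le
  refine ⟨L / (2 * (1 / K) * √(1 / K)), by positivity, fun A B hA hB hdetA hdetB ε hε hAB ↦ ?_⟩
  refine (abs_rpow_neg_half_sub_le (by positivity) hdetA hdetB).trans ?_
  rw [div_mul_eq_mul_div]
  gcongr
  exact hL A B hA hB ε hε hAB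

lemma exists_abs_dotProduct_inv_mulVec_sub_le (n : Type*) [Fintype n] [DecidableEq n] {K : ℝ}
    (hK : 0 < K) :
    ∃ Q, 0 ≤ Q ∧ ∀ A B : Matrix n n ℝ, (∀ i j, |A i j| ≤ K) → (∀ i j, |B i j| ≤ K) →
      1 / K ≤ A.det → 1 / K ≤ B.det → ∀ ε, 0 ≤ ε → (∀ i j, |A i j - B i j| ≤ ε) →
      ∀ y : n → ℝ, |y ⬝ᵥ A⁻¹ *ᵥ y - y ⬝ᵥ B⁻¹ *ᵥ y| ≤ Q * ε * ∑ i, y i ^ 2 := by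
  set M := (Fintype.card n).factorial * max K 1 ^ Fintype.card n / (1 / K)
  refine ⟨(Fintype.card n * M) ^ 2 * Fintype.card n, by positivity,
    fun A B hA hB hdetA hdetB ε hε hAB y ↦ ?_⟩
  have hunit {X : Matrix n n ℝ} (hX : 1 / K ≤ X.det) : IsUnit X.det :=
    (lt_of_lt_of_le (by positivity) hX).ne'.isUnit
  have hinv {X : Matrix n n ℝ} (hXK : ∀ i j, |X i j| ≤ K) (hX : 1 / K ≤ X.det) i j :
      |X⁻¹ i j| ≤ M :=
    abs_inv_apply_le hXK (by positivity) (hX.trans (le_abs_self _)) i j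
  calc _ ≤ ε * (Fintype.card n * M) ^ 2 * Fintype.card n * ∑ i, y i ^ 2 :=
        abs_dotProduct_inv_mulVec_sub_le (hunit hdetA) (hunit hdetB) hε (hinv hA hdetA)
          (hinv hB hdetB) hAB y
    _ = (Fintype.card n * M) ^ 2 * Fintype.card n * ε * ∑ i, y i ^ 2 := by ring

end Matrix

lemma abs_gaussianDensityMat_sub_le {d : ℕ} {S S' : Matrix (Fin d) (Fin d) ℝ} (hS' : 0 ≤ S'.det)
    (y : Fin d → ℝ) {m : ℝ} (hm : m ≤ y ⬝ᵥ S⁻¹ *ᵥ y) (hm' : m ≤ y ⬝ᵥ S'⁻¹ *ᵥ y) :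
    |gaussianDensityMat S y - gaussianDensityMat S' y| ≤
      (|S.det ^ (-(1:ℝ)/2) - S'.det ^ (-(1:ℝ)/2)| +
        S'.det ^ (-(1:ℝ)/2) * (|y ⬝ᵥ S⁻¹ *ᵥ y - y ⬝ᵥ S'⁻¹ *ᵥ y| / 2)) * exp (-m / 2) := by
  set q := y ⬝ᵥ S⁻¹ *ᵥ y
  set q' := y ⬝ᵥ S'⁻¹ *ᵥ y
  set a := S.det ^ (-(1:ℝ)/2)
  set a' := S'.det ^ (-(1:ℝ)/2)
  set c := (2 * π) ^ (-(d:ℝ)/2)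
  have hc0 : 0 ≤ c := by positivity
  have hc1 : c ≤ 1 := rpow_le_one_of_one_le_of_nonpos (by nlinarith [pi_gt_three])
    (by rw [neg_div]; exact neg_nonpos.2 (by positivity))
  have ha' : 0 ≤ a' := rpow_nonneg hS' _
  have hE : exp (-q / 2) ≤ exp (-m / 2) := exp_le_exp.2 (by linarith)
  have hEE' : |exp (-q / 2) - exp (-q' / 2)| ≤ exp (-m / 2) * (|q - q'| / 2) := by
    refine (abs_exp_sub_exp_le _ _).trans ?_
    rw [show -q / 2 - -q' / 2 = -((q - q') / 2) by ring, abs_neg, abs_div, abs_two]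
    gcongr
    exact max_le (by linarith) (by linarith)
  have hsplit : gaussianDensityMat S y - gaussianDensityMat S' y =
      c * ((a - a') * exp (-q / 2) + a' * (exp (-q / 2) - exp (-q' / 2))) := by
    simp only [gaussianDensityMat, c, a, a', q, q']
    ring
  rw [hsplit, abs_mul, abs_of_nonneg hc0]
  refine (mul_le_of_le_one_left (abs_nonneg _) hc1).trans ?_
  calc |(a - a') * exp (-q / 2) + a' * (exp (-q / 2) - exp (-q' / 2))|
      ≤ |a - a'| * exp (-q / 2) + a' * |exp (-q / 2) - exp (-q' / 2)| := by
        refine (abs_add_le _ _).trans_eq ?_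
        rw [abs_mul, abs_mul, abs_of_pos (exp_pos _), abs_of_nonneg ha']
    _ ≤ |a - a'| * exp (-m / 2) + a' * (exp (-m / 2) * (|q - q'| / 2)) := by gcongr
    _ = (|a - a'| + a' * (|q - q'| / 2)) * exp (-m / 2) := by ring

theorem gaussian_density_difference_bound_general (d : ℕ) (K : ℝ) (hK : 0 < K) :
    ∃ c C : ℝ, 0 < c ∧ 0 < C ∧ ∀ S S' : Matrix (Fin d) (Fin d) ℝ,
      S.PosDef → S'.PosDef →
      (∀ i j, |S i j| + |S' i j| < K) →
      1 / K < S.det → 1 / K < S'.det →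
      ∀ y : Fin d → ℝ,
        |gaussianDensityMat S y - gaussianDensityMat S' y| ≤
          C * (1 + ∑ i, (y i)^2) * exp (-c * ∑ i, (y i)^2) *
            (⨆ k : Fin d, ⨆ l : Fin d, |S k l - S' k l|) := by
  obtain ⟨P, hP0, hP⟩ := exists_abs_det_rpow_neg_half_sub_le (Fin d) hK
  obtain ⟨Q, hQ0, hQ⟩ := exists_abs_dotProduct_inv_mulVec_sub_le (Fin d) hK
  set c := 1 / (2 * ((d + 1) * K))
  set R := (1 / K) ^ (-(1:ℝ)/2) * Q / 2
  refine ⟨c, P + R + 1, by positivity, by positivity,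
    fun S S' hS hS' hSS' hdet hdet' y ↦ ?_⟩
  have hSK i j : |S i j| ≤ K := by linarith [hSS' i j, abs_nonneg (S' i j)]
  have hS'K i j : |S' i j| ≤ K := by linarith [hSS' i j, abs_nonneg (S i j)]
  set ε := ⨆ k : Fin d, ⨆ l : Fin d, |S k l - S' k l|
  have hε0 : 0 ≤ ε := iSup_nonneg fun _ ↦ iSup_nonneg fun _ ↦ abs_nonneg _
  have hε i j : |S i j - S' i j| ≤ ε := Finite.le_ciSup_of_le i (Finite.le_ciSup_of_le j le_rfl)
  set N := ∑ i, y i ^ 2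
  have hN : 0 ≤ N := by positivity
  calc _ ≤ _ := abs_gaussianDensityMat_sub_le hS'.det_pos.le y
        (hS.sum_sq_div_le_dotProduct_inv_mulVec hK hSK y)
        (hS'.sum_sq_div_le_dotProduct_inv_mulVec hK hS'K y)
    _ ≤ (P * ε + (1 / K) ^ (-(1:ℝ)/2) * (Q * ε * N / 2)) * exp (-c * N) := by
        gcongr (?_ + ?_ * (?_ / 2)) * ?_
        · exact hP S S' hSK hS'K hdet.le hdet'.le ε hε0 hε
        · exact rpow_le_rpow_of_nonpos (by positivity) hdet'.le (by norm_num)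
        · exact hQ S S' hSK hS'K hdet.le hdet'.le ε hε0 hε y
        · exact exp_le_exp.2 (le_of_eq (by simp only [N, c, Fintype.card_fin]; field_simp))
    _ ≤ (P + R + 1) * (1 + N) * exp (-c * N) * ε := by
        rw [show (P * ε + _ * (Q * ε * N / 2)) = (P + R * N) * ε by simp only [R]; ring]
        have hR : 0 ≤ R := by positivity
        rw [mul_right_comm]
        gcongr
        nlinarith [mul_nonneg hP0 hN]

/-- Pointwise comparison of Gaussian densities for well-conditioned covariance matrices. -/
theorem gaussian_density_difference_bound (d : ℕ) (hd : 1 ≤ d) (K : ℝ) (hK : 0 < K) :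
    ∃ c C : ℝ, 0 < c ∧ 0 < C ∧ ∀ S S' : Matrix (Fin d) (Fin d) ℝ,
      S.PosDef → S'.PosDef →
      (∀ i j, |S i j| + |S' i j| < K) →
      1 / K < S.det → 1 / K < S'.det →
      ∀ y : Fin d → ℝ,
        |gaussianDensityMat S y - gaussianDensityMat S' y| ≤
          C * (1 + ∑ i, (y i)^2) * exp (-c * ∑ i, (y i)^2) *
            (⨆ k : Fin d, ⨆ l : Fin d, |S k l - S' k l|) :=
  gaussian_density_difference_bound_general d K hK
end
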